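/- arXiv:math/0602553 — 2 statements merged into one kernel-verified Lean document; each statement's English description precedes it below -/
import Mathlib

section
/- Let Γ be a connected multigraph and l an edge joining two distinct vertices. For k ≥ 0 let B_k(Γ, l) be the graph obtained by subdividing l into a path of k+1 edges (introducing k new vertices). Then c(B_k(Γ, l)) = c(Γ) + k·c(Γ − l), where c denotes the number of spanning trees. -/
/-- A multigraph: a set of edges, each with an unordered pair of endpoints. -/
structure Multigraph (V E : Type) where
  ends : E → Sym2 V

namespace Multigraph

variable {V E : Type}

/-- Adjacency via an edge lying in the subset `S`. -/
def Adj (G : Multigraph V E) (S : Set E) (x y : V) : Prop :=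
  x ≠ y ∧ ∃ e ∈ S, G.ends e = s(x, y)

/-- The subgraph with edge set `S` is connected (and spans `V`). -/
def ConnectedOn (G : Multigraph V E) (S : Set E) : Prop :=
  ∀ x y : V, Relation.ReflTransGen (G.Adj S) x y

def Connected (G : Multigraph V E) : Prop := G.ConnectedOn Set.univ

/-- No edge is a loop. -/
def Loopless (G : Multigraph V E) : Prop := ∀ e : E, ¬ (G.ends e).IsDiag

/-- A spanning tree: a minimally connecting spanning set of edges. -/
def IsSpanningTree (G : Multigraph V E) (S : Finset E) : Prop :=
  G.ConnectedOn (S : Set E) ∧ ∀ e ∈ S, ¬ G.ConnectedOn ((S : Set E) \ {e})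

/-- The complexity: the number of spanning trees. -/
noncomputable def complexity (G : Multigraph V E) : ℕ :=
  {S : Finset E | G.IsSpanningTree S}.ncard

/-- Number of edges joining `x` and `y`. -/
noncomputable def edgeCount (G : Multigraph V E) (x y : V) : ℕ :=
  {e : E | G.ends e = s(x, y)}.ncard

/-- The Laplacian-type intersection matrix. -/
noncomputable def lap (G : Multigraph V E) [Fintype V] [DecidableEq V] (i j : V) : ℤ :=
  if i = j then -(∑ u ∈ Finset.univ.erase i, (G.edgeCount i u : ℤ))
  else (G.edgeCount i j : ℤ)

/-- The lattice of multidegrees of twisters: span of the columns of the Laplacian. -/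
noncomputable def lapLattice (G : Multigraph V E) [Fintype V] [DecidableEq V] :
    AddSubgroup (V → ℤ) :=
  AddSubgroup.closure (Set.range fun j => fun i => G.lap i j)

/-- The subgroup of `ℤ^V` of vectors with zero coordinate sum. -/
def zeroSum (V : Type) [Fintype V] : AddSubgroup (V → ℤ) where
  carrier := {z | ∑ v, z v = 0}
  add_mem' := by
    intro a b ha hb
    simp only [Set.mem_setOf_eq] at *
    simp [Finset.sum_add_distrib, ha, hb]
  zero_mem' := by simp
  neg_mem' := by
    intro a ha
    simp only [Set.mem_setOf_eq] at *
    simp [ha]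

/-- The degree class group of a multigraph. -/
noncomputable def DCG (G : Multigraph V E) [Fintype V] [DecidableEq V] : Type :=
  zeroSum V ⧸ (G.lapLattice.addSubgroupOf (zeroSum V))

noncomputable instance (G : Multigraph V E) [Fintype V] [DecidableEq V] :
    AddCommGroup (G.DCG) :=
  QuotientAddGroup.Quotient.addCommGroup _

/-- The class in the DCG of an element of the zero-sum lattice. -/
noncomputable def DCGclass (G : Multigraph V E) [Fintype V] [DecidableEq V]
    (z : zeroSum V) : G.DCG :=
  QuotientAddGroup.mk z

/-- The element `e_x - e_y` of the zero-sum lattice. -/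
def eDiff (V : Type) [Fintype V] [DecidableEq V] (x y : V) : zeroSum V :=
  ⟨fun v => (if v = x then 1 else 0) - (if v = y then 1 else 0), by
    show ∑ v : V, ((if v = x then (1:ℤ) else 0) - (if v = y then 1 else 0)) = 0
    simp [Finset.sum_sub_distrib]⟩

end Multigraph

namespace Multigraph
variable {V E : Type}

/-- The `j`-th vertex along the subdivision chain from `a` to `b` with `k` new vertices. -/
def subVert (a b : V) (k : ℕ) (j : ℕ) : V ⊕ Fin k :=
  if _h0 : j = 0 then Sum.inl a
  else if h : j ≤ k then Sum.inr ⟨j - 1, by omega⟩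
  else Sum.inl b

/-- Subdivide the edge `l` (with endpoints `a`, `b`) into a path of `k+1` edges
through `k` new vertices. -/
def subdivide (G : Multigraph V E) (l : E) (a b : V) (k : ℕ) :
    Multigraph (V ⊕ Fin k) ({f : E // f ≠ l} ⊕ Fin (k + 1)) where
  ends
  | Sum.inl f => (G.ends f.1).map Sum.inl
  | Sum.inr i => s(subVert a b k i.1, subVert a b k (i.1 + 1))

/-- Delete the edge `l`. -/
def deleteEdge (G : Multigraph V E) (l : E) : Multigraph V {f : E // f ≠ l} :=
  ⟨fun f => G.ends f.1⟩

end Multigraph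

/-!
A spanning tree of the subdivision `B_k(Γ, l)` cannot miss two edges of the new chain, since the
new vertices between two missing edges would be cut off. If it contains the whole chain it is a
spanning tree of `Γ` through `l` with `l` replaced by the chain; if it misses exactly one of the
`k + 1` chain edges it is a spanning tree of `Γ - l` together with the rest of the chain. Hence
`c(B_k(Γ, l)) = c_l + (k + 1) c(Γ - l)`, where `c_l` counts the spanning trees of `Γ` through `l`,
while `c(Γ) = c_l + c(Γ - l)`. The connectivity comparisons behind both correspondences come from
contracting the chain edges that are present.
-/

namespace Finset

variable {α β : Type*} {s : Finset α} {t : Finset β}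

theorem forall_mem_disjSum {p : α ⊕ β → Prop} :
    (∀ x ∈ s.disjSum t, p x) ↔ (∀ a ∈ s, p (.inl a)) ∧ ∀ b ∈ t, p (.inr b) := by
  simp [mem_disjSum, or_imp, forall_and]

variable [DecidableEq α] [DecidableEq β]

theorem disjSum_erase_inl (a : α) : (s.disjSum t).erase (.inl a) = (s.erase a).disjSum t := by
  ext (x | x) <;> simp

theorem disjSum_erase_inr (b : β) : (s.disjSum t).erase (.inr b) = s.disjSum (t.erase b) := by
  ext (x | x) <;> simp

end Finset

namespace Multigraph

open Relation Finset Function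

variable {V W E F : Type}

instance (G : Multigraph V E) (S : Set E) : Std.Symm (G.Adj S) where
  symm _ _ := fun ⟨hxy, e, he, hends⟩ => ⟨hxy.symm, e, he, hends.trans Sym2.eq_swap⟩

section Maps

variable {G : Multigraph V E} {H : Multigraph W F} {S : Set E} {T : Set F}

theorem ConnectedOn.of_map (f : V → W)
    (hadj : ∀ x y, G.Adj S x y → ReflTransGen (H.Adj T) (f x) (f y))
    (hcover : ∀ w, ∃ x, ReflTransGen (H.Adj T) w (f x)) (hG : G.ConnectedOn S) :
    H.ConnectedOn T := by
  intro u v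
  obtain ⟨x, hx⟩ := hcover u
  obtain ⟨y, hy⟩ := hcover v
  exact hx.trans ((ReflTransGen.lift' f hadj _ _ (hG x y)).trans (symm hy))

theorem ConnectedOn.of_surjective_map (f : W → V) (hf : Surjective f)
    (hadj : ∀ x y, H.Adj T x y → ReflTransGen (G.Adj S) (f x) (f y)) (hH : H.ConnectedOn T) :
    G.ConnectedOn S :=
  hH.of_map f hadj fun v => (hf v).imp fun _ hw => by rw [hw]

theorem Adj.reflTransGen_map (f : V → W)
    (hf : ∀ e ∈ S, ((G.ends e).map f).IsDiag ∨ ∃ e' ∈ T, H.ends e' = (G.ends e).map f)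
    {x y : V} (hxy : G.Adj S x y) : ReflTransGen (H.Adj T) (f x) (f y) := by
  obtain ⟨-, e, he, hends⟩ := hxy
  by_cases hfxy : f x = f y
  · rw [hfxy]
  rcases hf e he with hdiag | ⟨e', he', hends'⟩
  · rw [hends, Sym2.map_mk, Sym2.mk_isDiag_iff] at hdiag
    exact absurd hdiag hfxy
  · exact .single ⟨hfxy, e', he', by rw [hends', hends, Sym2.map_mk]⟩

end Maps

theorem ConnectedOn.apply_eq {G : Multigraph V E} {S : Set E} {β : Type*}
    (hG : G.ConnectedOn S) {f : V → β} (hf : ∀ x y, G.Adj S x y → f x = f y) (x y : V) :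
    f x = f y := by
  simpa [reflTransGen_eq_self] using ReflTransGen.lift f hf _ _ (hG x y)

theorem isSpanningTree_iff [DecidableEq E] {G : Multigraph V E} {S : Finset E} :
    G.IsSpanningTree S ↔ G.ConnectedOn S ∧ ∀ e ∈ S, ¬ G.ConnectedOn ↑(S.erase e) := by
  simp only [IsSpanningTree, coe_erase]

section DeleteEdge

variable (G : Multigraph V E) (l : E)

theorem deleteEdge_adj (T : Finset {f // f ≠ l}) :
    (G.deleteEdge l).Adj T = G.Adj ↑(T.map (Embedding.subtype _)) := by
  ext x y
  simp [Adj, deleteEdge]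

theorem deleteEdge_connectedOn_iff (T : Finset {f // f ≠ l}) :
    (G.deleteEdge l).ConnectedOn T ↔ G.ConnectedOn ↑(T.map (Embedding.subtype _)) := by
  rw [ConnectedOn, ConnectedOn, deleteEdge_adj]

theorem deleteEdge_isSpanningTree_iff [DecidableEq E] (T : Finset {f // f ≠ l}) :
    (G.deleteEdge l).IsSpanningTree T ↔ G.IsSpanningTree (T.map (Embedding.subtype _)) := by
  simp only [isSpanningTree_iff, deleteEdge_connectedOn_iff, forall_mem_map, map_erase]

end DeleteEdge

section Subdivision

/-- Contracts every chain edge except the `i`-th: the new vertex `t` lies between the chain edges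
`t` and `t + 1`. -/
def chainRetract (a b : V) (k : ℕ) (i : Fin (k + 1)) : V ⊕ Fin k → V :=
  Sum.elim id fun t => if t.1 < i.1 then a else b

variable {G : Multigraph V E} {l : E} {a b : V} {k : ℕ}

@[simp] theorem subVert_zero : subVert a b k 0 = .inl a := rfl

@[simp] theorem subVert_succ_self : subVert a b k (k + 1) = .inl b := by
  simp [subVert]

theorem subVert_succ_of_lt {j : ℕ} (hj : j < k) : subVert a b k (j + 1) = .inr ⟨j, hj⟩ := by
  simp [subVert, Nat.succ_le_of_lt hj]

theorem subVert_ne_succ (hab : a ≠ b) {j : ℕ} (hj : j ≤ k) :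
    subVert a b k j ≠ subVert a b k (j + 1) := by
  unfold subVert
  split_ifs <;> grind

theorem chainRetract_subVert (i : Fin (k + 1)) (j : ℕ) :
    chainRetract a b k i (subVert a b k j) = if j ≤ i.1 then a else b := by
  unfold subVert chainRetract
  split_ifs <;> grind

theorem reflTransGen_subVert (hab : a ≠ b) {S : Set ({f // f ≠ l} ⊕ Fin (k + 1))} {j m : ℕ}
    (hjm : j ≤ m) (hm : m ≤ k + 1)
    (hS : ∀ t (ht : t < k + 1), j ≤ t → t < m → .inr ⟨t, ht⟩ ∈ S) :
    ReflTransGen ((G.subdivide l a b k).Adj S) (subVert a b k j) (subVert a b k m) := by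
  induction m, hjm using Nat.le_induction with
  | base => rfl
  | succ m hjm ih =>
    exact (ih (by omega) fun t ht h1 h2 => hS t ht h1 (by omega)).tail
      ⟨subVert_ne_succ hab (by omega), .inr ⟨m, by omega⟩, hS m (by omega) hjm (by omega),
        rfl⟩

theorem ConnectedOn.of_subdivide (hl : G.ends l = s(a, b)) (i : Fin (k + 1))
    {T : Finset {f // f ≠ l}} {C : Finset (Fin (k + 1))} {U : Set E} (hT : ∀ f ∈ T, f.1 ∈ U)
    (hC : i ∈ C → l ∈ U) (h : (G.subdivide l a b k).ConnectedOn ↑(T.disjSum C)) :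
    G.ConnectedOn U := by
  refine h.of_surjective_map (chainRetract a b k i) (fun v => ⟨.inl v, rfl⟩)
    fun u v huv => huv.reflTransGen_map _ ?_
  rintro (f | m) he
  · refine .inr ⟨f, hT f (by simpa using he), ?_⟩
    simp [subdivide, Sym2.map_map, chainRetract]
  · simp only [subdivide, Sym2.map_mk, chainRetract_subVert]
    by_cases hmi : m = i
    · subst hmi
      exact .inr ⟨l, hC (by simpa using he), by simp [hl]⟩
    · have := Fin.val_ne_of_ne hmi
      left
      rw [Sym2.mk_isDiag_iff]
      split_ifs <;> first | rfl | omega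

theorem ConnectedOn.subdivide (hab : a ≠ b) (hl : G.ends l = s(a, b)) (i : Fin (k + 1))
    {T : Finset {f // f ≠ l}} {C : Finset (Fin (k + 1))} (hC : univ.erase i ⊆ C) {U : Set E}
    (hU : ∀ e ∈ U, (∃ h : e ≠ l, ⟨e, h⟩ ∈ T) ∨ (e = l ∧ i ∈ C)) (h : G.ConnectedOn U) :
    (G.subdivide l a b k).ConnectedOn ↑(T.disjSum C) := by
  have chain : ∀ {j m}, j ≤ m → m ≤ k + 1 → (i ∈ C ∨ ¬ (j ≤ i.1 ∧ i.1 < m)) →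
      ReflTransGen ((G.subdivide l a b k).Adj ↑(T.disjSum C)) (subVert a b k j)
        (subVert a b k m) := by
    refine fun hjm hm hi => reflTransGen_subVert hab hjm hm fun t ht h1 h2 => ?_
    by_cases hti : (⟨t, ht⟩ : Fin (k + 1)) = i
    · subst hti
      simpa [h1, h2] using hi
    · simpa using hC (mem_erase.mpr ⟨hti, mem_univ _⟩)
  refine h.of_map Sum.inl ?_ ?_
  · rintro x y ⟨hxy, e, he, hends⟩
    rcases hU e he with ⟨hel, heT⟩ | ⟨rfl, hiC⟩
    · exact .single ⟨Sum.inl_injective.ne hxy, .inl ⟨e, hel⟩, by simpa using heT,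
        by simp [Multigraph.subdivide, hends]⟩
    · have hpath := chain (j := 0) (m := k + 1) (by omega) le_rfl (.inl hiC)
      rcases Sym2.eq_iff.mp (hends.symm.trans hl) with ⟨rfl, rfl⟩ | ⟨rfl, rfl⟩
      · simpa using hpath
      · simpa using symm hpath
  · rintro (v | t)
    · exact ⟨v, .refl⟩
    · by_cases hti : t.1 < i.1
      · refine ⟨a, ?_⟩
        simpa [subVert_succ_of_lt t.isLt] using
          symm (chain (j := 0) (m := t + 1) (by omega) (by omega) (.inr (by omega)))
      · refine ⟨b, ?_⟩
        simpa [subVert_succ_of_lt t.isLt] using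
          chain (j := t + 1) (m := k + 1) (by omega) (by omega) (.inr (by omega))

theorem not_connectedOn_subdivide {S : Set ({f // f ≠ l} ⊕ Fin (k + 1))} {i j : Fin (k + 1)}
    (hij : i ≠ j) (hi : .inr i ∉ S) (hj : .inr j ∉ S) :
    ¬ (G.subdivide l a b k).ConnectedOn S := by
  wlog hlt : i < j generalizing i j
  · exact this hij.symm hj hi (lt_of_le_of_ne (not_lt.mp hlt) hij.symm)
  intro h
  let inside : V ⊕ Fin k → Prop := Sum.elim (fun _ => False) fun t => i.1 ≤ t.1 ∧ t.1 < j.1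
  have inside_subVert : ∀ p, inside (subVert a b k p) = (i.1 < p ∧ p ≤ j.1) := by
    intro p
    unfold subVert
    split_ifs <;> simp [inside] <;> omega
  have hik : i.1 < k := by omega
  refine absurd (h.apply_eq (f := inside) ?_ (.inl a) (.inr ⟨i.1, hik⟩)) ?_
  · rintro u v ⟨-, f | m, he, hends⟩
    · have old : ∀ w ∈ s(u, v), inside w = False := fun w hw => by
        obtain ⟨x, -, rfl⟩ := Sym2.mem_map.mp (hends ▸ hw)
        rfl
      rw [old u (Sym2.mem_mk_left u v), old v (Sym2.mem_mk_right u v)]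
    · have hmi : m ≠ i := fun hmi => hi (hmi ▸ he)
      have hmj : m ≠ j := fun hmj => hj (hmj ▸ he)
      have := Fin.val_ne_of_ne hmi
      have := Fin.val_ne_of_ne hmj
      have hside : inside (subVert a b k m) = inside (subVert a b k (m + 1)) := by
        rw [inside_subVert, inside_subVert]
        exact propext (by omega)
      rcases Sym2.eq_iff.mp hends with ⟨rfl, rfl⟩ | ⟨rfl, rfl⟩
      exacts [hside, hside.symm]
  · simp [inside, hlt]

theorem connectedOn_subdivide_disjSum_erase_iff (hab : a ≠ b) (hl : G.ends l = s(a, b))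
    (i : Fin (k + 1)) (T : Finset {f // f ≠ l}) :
    (G.subdivide l a b k).ConnectedOn ↑(T.disjSum (univ.erase i)) ↔
      (G.deleteEdge l).ConnectedOn ↑T := by
  rw [deleteEdge_connectedOn_iff]
  refine ⟨ConnectedOn.of_subdivide hl i (fun f hf => by simp [hf, f.2]) (fun h => by simp at h),
    ConnectedOn.subdivide hab hl i subset_rfl fun e he => ?_⟩
  obtain ⟨f, hf, rfl⟩ : ∃ f ∈ T, f.1 = e := by simpa using he
  exact .inl ⟨f.2, hf⟩

theorem eq_univ_or_eq_erase_of_connectedOn_subdivide {T : Finset {f // f ≠ l}}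
    {C : Finset (Fin (k + 1))} (h : (G.subdivide l a b k).ConnectedOn ↑(T.disjSum C)) :
    C = univ ∨ ∃ i, C = univ.erase i := by
  by_contra! hC
  obtain ⟨i, -, hi⟩ := exists_of_ssubset (ssubset_univ_iff.mpr hC.1)
  have hsub : C ⊂ univ.erase i := Finset.ssubset_iff_subset_ne.mpr
    ⟨fun j hj => mem_erase.mpr ⟨fun (hji : j = i) => hi (hji ▸ hj), mem_univ _⟩, hC.2 i⟩
  obtain ⟨j, hji, hj⟩ := exists_of_ssubset hsub
  exact not_connectedOn_subdivide (ne_of_mem_erase hji) (by simpa using hj) (by simpa using hi) h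

variable [DecidableEq E]

theorem connectedOn_subdivide_disjSum_univ_iff (hab : a ≠ b)
    (hl : G.ends l = s(a, b)) (T : Finset {f // f ≠ l}) :
    (G.subdivide l a b k).ConnectedOn ↑(T.disjSum (univ : Finset (Fin (k + 1)))) ↔
      G.ConnectedOn ↑(insert l (T.map (Embedding.subtype _))) := by
  refine ⟨ConnectedOn.of_subdivide hl 0 (fun f hf => by simp [hf, f.2]) (fun _ => by simp),
    ConnectedOn.subdivide hab hl 0 (subset_univ _) fun e he => ?_⟩
  obtain rfl | ⟨f, hf, rfl⟩ : e = l ∨ ∃ f ∈ T, f.1 = e := by simpa using he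
  exacts [.inr ⟨rfl, mem_univ _⟩, .inl ⟨f.2, hf⟩]

theorem isSpanningTree_subdivide_disjSum_erase_iff (hab : a ≠ b) (hl : G.ends l = s(a, b))
    (i : Fin (k + 1)) (T : Finset {f // f ≠ l}) :
    (G.subdivide l a b k).IsSpanningTree (T.disjSum (univ.erase i)) ↔
      (G.deleteEdge l).IsSpanningTree T := by
  have two_missing : ∀ m ∈ univ.erase i,
      ¬ (G.subdivide l a b k).ConnectedOn ↑(T.disjSum ((univ.erase i).erase m)) :=
    fun m hm => not_connectedOn_subdivide (ne_of_mem_erase hm) (by simp) (by simp)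
  simp only [isSpanningTree_iff, forall_mem_disjSum, disjSum_erase_inl, disjSum_erase_inr,
    connectedOn_subdivide_disjSum_erase_iff hab hl, and_iff_left two_missing]

theorem isSpanningTree_subdivide_disjSum_univ_iff (hab : a ≠ b) (hl : G.ends l = s(a, b))
    (T : Finset {f // f ≠ l}) :
    (G.subdivide l a b k).IsSpanningTree (T.disjSum univ) ↔
      G.IsSpanningTree (insert l (T.map (Embedding.subtype _))) := by
  have erase_l : (insert l (T.map (Embedding.subtype _))).erase l = T.map (Embedding.subtype _) :=
    erase_insert (by simp)
  have erase_f : ∀ f, (insert l (T.map (Embedding.subtype _))).erase (Embedding.subtype _ f) =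
      insert l ((T.erase f).map (Embedding.subtype _)) := fun f => by
    rw [map_erase]
    exact erase_insert_of_ne (Ne.symm f.2)
  simp only [isSpanningTree_iff, forall_mem_disjSum, forall_mem_insert, forall_mem_map,
    disjSum_erase_inl, disjSum_erase_inr, connectedOn_subdivide_disjSum_univ_iff hab hl,
    connectedOn_subdivide_disjSum_erase_iff hab hl, deleteEdge_connectedOn_iff, erase_l, erase_f,
    mem_univ, forall_const]
  tauto

theorem isSpanningTree_subdivide_disjSum_iff (hab : a ≠ b) (hl : G.ends l = s(a, b))
    (T : Finset {f // f ≠ l}) (C : Finset (Fin (k + 1))) :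
    (G.subdivide l a b k).IsSpanningTree (T.disjSum C) ↔
      (C = univ ∧ G.IsSpanningTree (insert l (T.map (Embedding.subtype _)))) ∨
        ∃ i, C = univ.erase i ∧ (G.deleteEdge l).IsSpanningTree T := by
  constructor
  · intro h
    rcases eq_univ_or_eq_erase_of_connectedOn_subdivide h.1 with rfl | ⟨i, rfl⟩
    · exact .inl ⟨rfl, (isSpanningTree_subdivide_disjSum_univ_iff hab hl T).mp h⟩
    · exact .inr ⟨i, rfl, (isSpanningTree_subdivide_disjSum_erase_iff hab hl i T).mp h⟩
  · rintro (⟨rfl, h⟩ | ⟨i, rfl, h⟩)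
    · exact (isSpanningTree_subdivide_disjSum_univ_iff hab hl T).mpr h
    · exact (isSpanningTree_subdivide_disjSum_erase_iff hab hl i T).mpr h

end Subdivision

section Counting

variable (G : Multigraph V E) (l : E)

noncomputable def complexityThrough : ℕ :=
  {S : Finset E | G.IsSpanningTree S ∧ l ∈ S}.ncard

variable [DecidableEq E]

theorem ncard_isSpanningTree_insert_map :
    {T : Finset {f // f ≠ l} | G.IsSpanningTree (insert l (T.map (Embedding.subtype _)))}.ncard =
      G.complexityThrough l := by
  have hinj : Injective fun T : Finset {f // f ≠ l} => insert l (T.map (Embedding.subtype _)) :=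
    fun T T' h => by simpa [erase_insert] using congrArg (·.erase l) h
  rw [complexityThrough, ← Set.ncard_image_of_injective _ hinj]
  congr 1
  ext S
  refine ⟨fun ⟨T, hT, hS⟩ => hS ▸ ⟨hT, mem_insert_self _ _⟩, fun ⟨hS, hlS⟩ => ?_⟩
  have hS_eq : insert l ((S.subtype (· ≠ l)).map (Embedding.subtype _)) = S := by
    rw [subtype_map, filter_ne', insert_erase hlS]
  exact ⟨S.subtype (· ≠ l), by rwa [Set.mem_ofPred_eq, hS_eq], hS_eq⟩

theorem complexity_eq_complexityThrough_add [Finite E] :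
    G.complexity = G.complexityThrough l + (G.deleteEdge l).complexity := by
  have hsplit : {S | G.IsSpanningTree S} = {S | G.IsSpanningTree S ∧ l ∈ S} ∪
      (·.map (Embedding.subtype _)) '' {T | (G.deleteEdge l).IsSpanningTree T} := by
    ext S
    simp only [Set.mem_union, Set.mem_ofPred_eq, Set.mem_image, deleteEdge_isSpanningTree_iff]
    refine ⟨fun hS => ?_, by rintro (⟨hS, -⟩ | ⟨T, hT, rfl⟩) <;> assumption⟩
    by_cases hlS : l ∈ S
    · exact .inl ⟨hS, hlS⟩
    · have hS_eq : (S.subtype (· ≠ l)).map (Embedding.subtype _) = S :=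
        subtype_map_of_mem fun e he => ne_of_mem_of_not_mem he hlS
      exact .inr ⟨S.subtype (· ≠ l), by rwa [hS_eq], hS_eq⟩
  have hdisj : Disjoint {S | G.IsSpanningTree S ∧ l ∈ S}
      ((·.map (Embedding.subtype _)) '' {T | (G.deleteEdge l).IsSpanningTree T}) := by
    refine Set.disjoint_left.mpr ?_
    rintro _ ⟨-, hlS⟩ ⟨T, -, rfl⟩
    simp at hlS
  rw [complexity, hsplit, Set.ncard_union_eq hdisj,
    Set.ncard_image_of_injective _ (map_injective _)]
  rfl

theorem complexity_subdivide_eq [Finite E] {a b : V} (hab : a ≠ b) (hl : G.ends l = s(a, b))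
    (k : ℕ) : (G.subdivide l a b k).complexity =
      G.complexityThrough l + (k + 1) * (G.deleteEdge l).complexity := by
  set A := {T : Finset {f // f ≠ l} | G.IsSpanningTree (insert l (T.map (Embedding.subtype _)))}
  set B := {T | (G.deleteEdge l).IsSpanningTree T}
  have hpairs : uncurry disjSum ⁻¹' {S | (G.subdivide l a b k).IsSpanningTree S} =
        A ×ˢ {(univ : Finset (Fin (k + 1)))} ∪ B ×ˢ Set.range (univ.erase ·) := by
    ext ⟨T, C⟩
    simp [isSpanningTree_subdivide_disjSum_iff hab hl, A, B, and_comm, eq_comm]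
  have hdisj : Disjoint (A ×ˢ {(univ : Finset (Fin (k + 1)))}) (B ×ˢ Set.range (univ.erase ·)) := by
    refine Set.disjoint_left.mpr ?_
    rintro ⟨T, C⟩ ⟨-, hC⟩ ⟨-, i, hi⟩
    simp_all
  have hrange : (Set.range fun i : Fin (k + 1) => univ.erase i).ncard = k + 1 := by
    rw [Set.ncard_range_of_injective fun i j h => (erase_inj _ (mem_univ i)).mp h, Nat.card_fin]
  rw [complexity, ← Set.ncard_preimage_of_injective_subset_range Injective2_disjSum.uncurry
    fun S _ => ⟨(S.toLeft, S.toRight), toLeft_disjSum_toRight⟩, hpairs, Set.ncard_union_eq hdisj,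
    Set.ncard_prod, Set.ncard_prod, Set.ncard_singleton, hrange, ncard_isSpanningTree_insert_map,
    mul_one, mul_comm]
  rfl

end Counting

end Multigraph

open Multigraph in
theorem complexity_subdivide_general {V E : Type} [Fintype E]
    (G : Multigraph V E) (l : E) (a b : V) (hab : a ≠ b)
    (hl : G.ends l = s(a, b)) (k : ℕ) :
    (G.subdivide l a b k).complexity = G.complexity + k * (G.deleteEdge l).complexity := by
  classical
  rw [complexity_subdivide_eq G l hab hl, complexity_eq_complexityThrough_add G l]
  ring

open Multigraph in
/-- Iterated blow-up formula: subdividing the edge `l` (joining distinct vertices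
`a`, `b`) into a path of `k + 1` edges gives `c(B_k(Γ, l)) = c(Γ) + k * c(Γ - l)`. -/
theorem complexity_subdivide {V E : Type} [Fintype V] [Fintype E] [DecidableEq V]
    (G : Multigraph V E) (hG : G.Connected) (l : E) (a b : V) (hab : a ≠ b)
    (hl : G.ends l = s(a, b)) (k : ℕ) :
    (G.subdivide l a b k).complexity = G.complexity + k * (G.deleteEdge l).complexity :=
  complexity_subdivide_general G l a b hab hl k
end

section
/- For N ≥ 2 and m ≥ 1, the degree class group of the graph with two vertices joined by one path of length m and N−1 single edges (i.e. m_1 = m, m_2 = ⋯ = m_N = 1) is cyclic of order 1 + m(N−1): Δ_N(1^m) ≅ ℤ/(1 + m(N−1))ℤ. -/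
namespace Multigraph

/-- The `j`-th vertex along the `i`-th path of the generalized theta graph:
`Sum.inl 0 = A` for `j = 0`, the internal vertices for `1 ≤ j ≤ m i - 1`,
and `Sum.inl 1 = B` for `j ≥ m i`. -/
def thetaVert (N : ℕ) (m : Fin N → ℕ) (i : Fin N) (j : ℕ) :
    Fin 2 ⊕ Σ i : Fin N, Fin (m i - 1) :=
  if _h0 : j = 0 then Sum.inl 0
  else if h : j ≤ m i - 1 then Sum.inr ⟨i, ⟨j - 1, by omega⟩⟩
  else Sum.inl 1

/-- The generalized theta graph `Γ_N(m)`: two vertices `A = Sum.inl 0` and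
`B = Sum.inl 1` joined by `N` internally disjoint paths, the `i`-th of length `m i`. -/
def theta (N : ℕ) (m : Fin N → ℕ) :
    Multigraph (Fin 2 ⊕ Σ i : Fin N, Fin (m i - 1)) (Σ i : Fin N, Fin (m i)) :=
  ⟨fun e => s(thetaVert N m e.1 e.2.1, thetaVert N m e.1 (e.2.1 + 1))⟩

end Multigraph

/-!
Every vertex lies on the long path `A = P₀, P₁, …, P_m = B`, and the other `N - 1` edges join
`A` to `B`. Let `g` be the class of `e_{P₁} - e_{P₀}` in the degree class group. The Laplacian
relations at the interior vertices say that the classes of `e_{Pₐ} - e_{P₀}` have vanishing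
second differences, hence equal `a • g`; so `g` generates, and the relation at `B` reads
`(1 + m(N-1)) • g = 0`. Conversely, the weight `Pₐ ↦ a` pairs every Laplacian column with
`0` or `±(1 + m(N-1))`, so it induces a map to `ZMod (1 + m(N-1))` sending `g` to `1`.
-/

lemma AddMonoidHom.bijective_of_zmultiples_eq_top {Q : Type*} [AddCommGroup Q] {n : ℕ}
    (ψ : Q →+ ZMod n) {g : Q} (hg : AddSubgroup.zmultiples g = ⊤) (hψg : ψ g = 1)
    (hng : n • g = 0) : Function.Bijective ψ := by
  have hψ (k : ℤ) : ψ (k • g) = k := by rw [map_zsmul, hψg, zsmul_one]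
  refine ⟨(injective_iff_map_eq_zero ψ).mpr fun q hq => ?_, fun x => ?_⟩
  · obtain ⟨k, rfl⟩ := AddSubgroup.mem_zmultiples_iff.mp (hg ▸ AddSubgroup.mem_top q)
    obtain ⟨d, rfl⟩ := (ZMod.intCast_zmod_eq_zero_iff_dvd k n).mp (hψ k ▸ hq)
    rw [mul_comm, mul_zsmul, natCast_zsmul, hng, zsmul_zero]
  · obtain ⟨k, rfl⟩ := ZMod.intCast_surjective x
    exact ⟨k • g, hψ k⟩

lemma eq_add_nsmul_of_sub_eq_sub {M : Type*} [AddCommGroup M] {m : ℕ} {x : ℕ → M}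
    (hx : ∀ b, b + 2 ≤ m → x (b + 2) - x (b + 1) = x (b + 1) - x b) {a : ℕ} (ha : a ≤ m) :
    x a = x 0 + a • (x 1 - x 0) := by
  have hstep : ∀ b, b + 1 ≤ m → x (b + 1) - x b = x 1 - x 0 := by
    intro b hb
    induction b with
    | zero => rfl
    | succ b ih => rw [hx b hb, ih (by omega)]
  induction a with
  | zero => simp
  | succ a ih => rw [sub_eq_iff_eq_add.mp (hstep a ha), ih (by omega), succ_nsmul]; abel

namespace Multigraph

section General

variable {V E : Type} (G : Multigraph V E)

lemma edgeCount_comm (x y : V) : G.edgeCount x y = G.edgeCount y x := by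
  simp only [edgeCount, Sym2.eq_swap]

lemma edgeCount_eq_card_filter [Fintype E] [DecidableEq V] (x y : V) :
    G.edgeCount x y = (Finset.univ.filter fun e => G.ends e = s(x, y)).card := by
  rw [edgeCount, ← Set.ncard_coe_finset]; simp

variable [Fintype V] [DecidableEq V]

lemma eDiff_self (x : V) : eDiff V x x = 0 := by
  ext v; simp [eDiff]

lemma eDiff_sub_eDiff (x y o : V) : eDiff V x o - eDiff V y o = eDiff V x y := by
  ext v; simp [eDiff]

lemma lap_col_eq_sum (j : V) :
    (fun i => G.lap i j) = ∑ u, G.edgeCount j u • (eDiff V u j : V → ℤ) := by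
  funext i
  simp only [Finset.sum_apply, Pi.smul_apply, eDiff, smul_sub, smul_ite, smul_zero,
    Finset.sum_sub_distrib, Finset.sum_ite_eq, Finset.mem_univ, if_true, lap]
  by_cases hij : i = j
  · subst hij
    simp [Finset.sum_erase_eq_sub]
  · simp [hij, edgeCount_comm G j i]

noncomputable def toDCG : zeroSum V →+ G.DCG := QuotientAddGroup.mk' _

lemma toDCG_surjective : Function.Surjective G.toDCG := QuotientAddGroup.mk'_surjective _

lemma toDCG_eq_zero_iff (z : zeroSum V) : G.toDCG z = 0 ↔ (z : V → ℤ) ∈ G.lapLattice :=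
  (QuotientAddGroup.eq_zero_iff z).trans AddSubgroup.mem_addSubgroupOf

lemma sum_edgeCount_nsmul_toDCG_sub (o j : V) :
    ∑ u, G.edgeCount j u • (G.toDCG (eDiff V u o) - G.toDCG (eDiff V j o)) = 0 := by
  simp_rw [← map_sub, eDiff_sub_eDiff, ← map_nsmul, ← map_sum, toDCG_eq_zero_iff]
  rw [AddSubgroup.val_finsetSum]
  simp only [AddSubgroup.coe_nsmul, ← lap_col_eq_sum]
  exact AddSubgroup.subset_closure ⟨j, rfl⟩

lemma toDCG_eq_sum (o : V) (z : zeroSum V) :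
    G.toDCG z = ∑ v, (z : V → ℤ) v • G.toDCG (eDiff V v o) := by
  simp_rw [← map_zsmul, ← map_sum]
  congr 1
  ext u
  have hz : ∑ v, (z : V → ℤ) v = 0 := z.2
  simp [eDiff, mul_sub, Finset.sum_sub_distrib, hz]

def weight (w : V → ℤ) : (V → ℤ) →+ ℤ :=
  AddMonoidHom.mk' (fun z => ∑ v, w v * z v) fun a b => by
    simp [mul_add, Finset.sum_add_distrib]

lemma weight_eDiff (w : V → ℤ) (x y : V) : weight w (eDiff V x y) = w x - w y := by
  simp [weight, eDiff, mul_sub, Finset.sum_sub_distrib]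

lemma weight_lap_col (w : V → ℤ) (j : V) :
    weight w (fun i => G.lap i j) = ∑ u, G.edgeCount j u • (w u - w j) := by
  simp only [lap_col_eq_sum, map_sum, map_nsmul, weight_eDiff]

variable {G} in
noncomputable def weightDCGHom (n : ℕ) (w : V → ℤ)
    (hw : ∀ j, (n : ℤ) ∣ ∑ u, G.edgeCount j u • (w u - w j)) : G.DCG →+ ZMod n :=
  QuotientAddGroup.lift _ ((Int.castAddHom (ZMod n)).comp ((weight w).comp (zeroSum V).subtype))
    fun z hz => by
      have hlat : G.lapLattice ≤ ((Int.castAddHom (ZMod n)).comp (weight w)).ker := by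
        refine (AddSubgroup.closure_le _).mpr ?_
        rintro _ ⟨j, rfl⟩
        rw [SetLike.mem_coe, AddMonoidHom.mem_ker, AddMonoidHom.comp_apply, weight_lap_col,
          Int.coe_castAddHom, ZMod.intCast_zmod_eq_zero_iff_dvd]
        exact hw j
      exact hlat (AddSubgroup.mem_addSubgroupOf.mp hz)

lemma weightDCGHom_toDCG (n : ℕ) (w : V → ℤ)
    (hw : ∀ j, (n : ℤ) ∣ ∑ u, G.edgeCount j u • (w u - w j)) (z : zeroSum V) :
    weightDCGHom n w hw (G.toDCG z) = weight w z := rfl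

theorem nonempty_DCG_addEquiv_zmod (n : ℕ) (w : V → ℤ)
    (hw : ∀ j, (n : ℤ) ∣ ∑ u, G.edgeCount j u • (w u - w j)) (o v₁ : V)
    (hv₁ : w v₁ - w o = 1)
    (hD : ∀ v, G.toDCG (eDiff V v o) = (w v - w o) • G.toDCG (eDiff V v₁ o))
    (hn : n • G.toDCG (eDiff V v₁ o) = 0) : Nonempty (G.DCG ≃+ ZMod n) := by
  set g := G.toDCG (eDiff V v₁ o)
  have hg : AddSubgroup.zmultiples g = ⊤ := by
    refine eq_top_iff.mpr fun q _ => ?_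
    obtain ⟨z, rfl⟩ := G.toDCG_surjective q
    rw [toDCG_eq_sum G o]
    exact AddSubgroup.sum_mem _ fun v _ =>
      AddSubgroup.zsmul_mem _ (hD v ▸ AddSubgroup.zsmul_mem_zmultiples _ _) _
  have hψg : weightDCGHom n w hw g = 1 := by
    simp [g, weightDCGHom_toDCG, weight_eDiff, hv₁]
  exact ⟨AddEquiv.ofBijective _
    ((weightDCGHom n w hw).bijective_of_zmultiples_eq_top hg hψg hn)⟩

end General

section OneLongPath

variable (N m : ℕ)

def oneLong : Fin N → ℕ := fun i => if i.val = 0 then m else 1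

abbrev OneLongVert : Type := Fin 2 ⊕ Σ i : Fin N, Fin (oneLong N m i - 1)

def pathPos : OneLongVert N m → ℕ
  | Sum.inl a => if a = 0 then 0 else m
  | Sum.inr ⟨_, t⟩ => t + 1

variable [NeZero N]

def pathVert (a : ℕ) : OneLongVert N m := thetaVert N (oneLong N m) 0 a

lemma oneLong_zero : oneLong N m 0 = m := by simp [oneLong]

lemma oneLong_of_ne_zero {i : Fin N} (hi : i ≠ 0) : oneLong N m i = 1 := by
  rw [oneLong, if_neg fun h => hi (Fin.ext (by simpa using h))]

lemma pathVert_top (hm : 1 ≤ m) : pathVert N m m = Sum.inl 1 := by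
  rw [pathVert, thetaVert, dif_neg (by omega), dif_neg (by rw [oneLong_zero]; omega)]

lemma pathVert_of_pos_of_lt {a : ℕ} (h0 : 0 < a) (h : a < m) :
    pathVert N m a = Sum.inr ⟨0, ⟨a - 1, by rw [oneLong_zero]; omega⟩⟩ := by
  rw [pathVert, thetaVert, dif_neg (by omega), dif_pos (by rw [oneLong_zero]; omega)]

lemma pathPos_pathVert {a : ℕ} (ha : a ≤ m) : pathPos N m (pathVert N m a) = a := by
  rcases Nat.eq_zero_or_pos a with rfl | h0
  · rfl
  rcases ha.lt_or_eq with h | h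
  · rw [pathVert_of_pos_of_lt N m h0 h]
    exact Nat.sub_add_cancel h0
  · rw [h, pathVert_top N m (h ▸ h0)]
    rfl

lemma pathVert_pathPos (hm : 1 ≤ m) (v : OneLongVert N m) : pathVert N m (pathPos N m v) = v := by
  rcases v with a | ⟨i, t⟩
  · fin_cases a
    · rfl
    · exact pathVert_top N m hm
  · obtain rfl : i = 0 := by
      by_contra hi
      exact (oneLong_of_ne_zero N m hi ▸ t).elim0
    have ht := t.isLt
    simp only [oneLong_zero] at ht
    rw [show pathPos N m (Sum.inr ⟨0, t⟩) = t + 1 from rfl,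
      pathVert_of_pos_of_lt N m (Nat.succ_pos _) (by omega)]
    rfl

lemma pathPos_le (v : OneLongVert N m) : pathPos N m v ≤ m := by
  rcases v with a | ⟨i, t⟩
  · fin_cases a <;> simp [pathPos]
  · have ht := t.isLt
    by_cases hi : i = 0
    · subst hi
      simp only [oneLong_zero] at ht
      exact Nat.succ_le_of_lt (by omega)
    · simp only [oneLong_of_ne_zero N m hi] at ht; omega

lemma pathVert_inj {a b : ℕ} (ha : a ≤ m) (hb : b ≤ m) :
    pathVert N m a = pathVert N m b ↔ a = b :=
  ⟨fun h => by rw [← pathPos_pathVert N m ha, h, pathPos_pathVert N m hb], congrArg _⟩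

lemma sum_oneLongVert {M : Type*} [AddCommMonoid M] (hm : 1 ≤ m) (f : OneLongVert N m → M) :
    ∑ v, f v = ∑ a ∈ Finset.range (m + 1), f (pathVert N m a) :=
  Finset.sum_nbij' (pathPos N m) (pathVert N m)
    (fun v _ => Finset.mem_range_succ_iff.mpr (pathPos_le N m v)) (fun _ _ => Finset.mem_univ _)
    (fun v _ => pathVert_pathPos N m hm v)
    (fun a ha => pathPos_pathVert N m (Finset.mem_range_succ_iff.mp ha))
    (fun v _ => by rw [pathVert_pathPos N m hm v])

lemma theta_ends_of_ne_zero (hm : 1 ≤ m) {i : Fin N} (hi : i ≠ 0) (j : Fin (oneLong N m i)) :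
    (theta N (oneLong N m)).ends ⟨i, j⟩ = s(pathVert N m 0, pathVert N m m) := by
  have hj : (j : ℕ) = 0 := by have := j.isLt; have := oneLong_of_ne_zero N m hi; omega
  show s(thetaVert N (oneLong N m) i j, thetaVert N (oneLong N m) i (j + 1)) = _
  rw [hj, pathVert_top N m hm, thetaVert, thetaVert, dif_pos rfl, dif_neg (Nat.succ_ne_zero 0),
    dif_neg (by rw [oneLong_of_ne_zero N m hi]; omega)]
  rfl

lemma sum_ite_theta_ends_zero {a b : ℕ} (ha : a ≤ m) (hb : b ≤ m) :
    ∑ j : Fin (oneLong N m 0), (if (theta N (oneLong N m)).ends ⟨0, j⟩ =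
      s(pathVert N m a, pathVert N m b) then 1 else 0) =
      (if b = a + 1 then 1 else 0) + (if a = b + 1 then 1 else 0) := by
  refine (Fin.sum_univ_eq_sum_range (fun j => if s(pathVert N m j, pathVert N m (j + 1)) =
    s(pathVert N m a, pathVert N m b) then 1 else 0) _).trans ?_
  rw [oneLong_zero]
  have hsplit : ∀ j ∈ Finset.range m, (if s(pathVert N m j, pathVert N m (j + 1)) =
      s(pathVert N m a, pathVert N m b) then 1 else 0) =
      (if j = a then (if b = a + 1 then 1 else 0) else 0) +
        (if j = b then (if a = b + 1 then 1 else 0) else 0) := by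
    intro j hj
    have hj := Finset.mem_range.mp hj
    simp only [Sym2.eq_iff, pathVert_inj N m hj.le ha, pathVert_inj N m hj hb,
      pathVert_inj N m hj.le hb, pathVert_inj N m hj ha]
    split_ifs <;> omega
  rw [Finset.sum_congr rfl hsplit, Finset.sum_add_distrib, Finset.sum_ite_eq',
    Finset.sum_ite_eq']
  simp only [Finset.mem_range]
  split_ifs <;> omega

lemma sum_ite_theta_ends_of_ne_zero (hm : 1 ≤ m) {i : Fin N} (hi : i ≠ 0) {a b : ℕ}
    (ha : a ≤ m) (hb : b ≤ m) :
    ∑ j : Fin (oneLong N m i), (if (theta N (oneLong N m)).ends ⟨i, j⟩ =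
      s(pathVert N m a, pathVert N m b) then 1 else 0) =
      if a = 0 ∧ b = m ∨ a = m ∧ b = 0 then 1 else 0 := by
  simp only [theta_ends_of_ne_zero N m hm hi, Sym2.eq_iff, pathVert_inj N m (Nat.zero_le _) ha,
    pathVert_inj N m le_rfl hb, pathVert_inj N m (Nat.zero_le _) hb, pathVert_inj N m le_rfl ha,
    Finset.sum_const, Finset.card_univ, Fintype.card_fin, oneLong_of_ne_zero N m hi, one_smul]
  split_ifs <;> omega

lemma edgeCount_pathVert (hm : 1 ≤ m) {a b : ℕ} (ha : a ≤ m) (hb : b ≤ m) :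
    (theta N (oneLong N m)).edgeCount (pathVert N m a) (pathVert N m b) =
      (if b = a + 1 then 1 else 0) + (if a = b + 1 then 1 else 0) +
        (if a = 0 ∧ b = m ∨ a = m ∧ b = 0 then N - 1 else 0) := by
  rw [edgeCount_eq_card_filter, Finset.card_filter, Fintype.sum_sigma,
    ← Finset.add_sum_erase _ _ (Finset.mem_univ 0), sum_ite_theta_ends_zero N m ha hb,
    Finset.sum_congr rfl fun i hi =>
      sum_ite_theta_ends_of_ne_zero N m hm (Finset.ne_of_mem_erase hi) ha hb,
    Finset.sum_const, Finset.card_erase_of_mem (Finset.mem_univ _), Finset.card_univ,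
    Fintype.card_fin, smul_ite, smul_zero, smul_eq_mul, mul_one]

lemma sum_edgeCount_pathVert_nsmul {M : Type*} [AddCommMonoid M] (hm : 1 ≤ m) (F : ℕ → M)
    {b : ℕ} (hb : b ≤ m) :
    ∑ u, (theta N (oneLong N m)).edgeCount (pathVert N m b) u • F (pathPos N m u) =
      (if b < m then F (b + 1) else 0) + (if 0 < b then F (b - 1) else 0) +
        (if b = 0 then (N - 1) • F m else 0) + (if b = m then (N - 1) • F 0 else 0) := by
  have hterm : ∀ a ∈ Finset.range (m + 1),
      (theta N (oneLong N m)).edgeCount (pathVert N m b) (pathVert N m a) •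
        F (pathPos N m (pathVert N m a)) =
      (if a = b + 1 then F a else 0) + (if a = b - 1 ∧ 0 < b then F a else 0) +
        (if a = m ∧ b = 0 then (N - 1) • F a else 0) +
        (if a = 0 ∧ b = m then (N - 1) • F a else 0) := by
    intro a ha
    have ha := Finset.mem_range_succ_iff.mp ha
    rw [pathPos_pathVert N m ha, edgeCount_pathVert N m hm hb ha]
    split_ifs <;> first | omega | simp [add_smul]
  rw [sum_oneLongVert N m hm, Finset.sum_congr rfl hterm]
  simp only [Finset.sum_add_distrib, ite_and, Finset.sum_ite_eq', Finset.mem_range,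
    Nat.add_lt_add_iff_right, Nat.lt_succ_self, Nat.succ_pos, if_true,
    show b - 1 < m + 1 by omega]

noncomputable def pathClass (a : ℕ) : (theta N (oneLong N m)).DCG :=
  (theta N (oneLong N m)).toDCG (eDiff _ (pathVert N m a) (pathVert N m 0))

lemma pathClass_zero : pathClass N m 0 = 0 := by
  rw [pathClass, eDiff_self, map_zero]

lemma pathClass_relation (hm : 1 ≤ m) {b : ℕ} (hb : b ≤ m) :
    (if b < m then pathClass N m (b + 1) - pathClass N m b else 0) +
      (if 0 < b then pathClass N m (b - 1) - pathClass N m b else 0) +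
      (if b = 0 then (N - 1) • (pathClass N m m - pathClass N m b) else 0) +
      (if b = m then (N - 1) • (pathClass N m 0 - pathClass N m b) else 0) = 0 := by
  rw [← sum_edgeCount_pathVert_nsmul N m hm (fun a => pathClass N m a - pathClass N m b) hb]
  simp only [pathClass, pathVert_pathPos N m hm]
  exact sum_edgeCount_nsmul_toDCG_sub _ _ _

lemma pathClass_eq_nsmul (hm : 1 ≤ m) {a : ℕ} (ha : a ≤ m) :
    pathClass N m a = a • pathClass N m 1 := by
  have hx : ∀ b, b + 2 ≤ m → pathClass N m (b + 2) - pathClass N m (b + 1) =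
      pathClass N m (b + 1) - pathClass N m b := by
    intro b hb
    have h := pathClass_relation N m hm (b := b + 1) (by omega)
    simp only [show b + 1 < m by omega, Nat.succ_pos, Nat.add_sub_cancel, if_true,
      show b + 1 ≠ 0 by omega, show b + 1 ≠ m by omega, if_false, add_zero] at h
    rw [eq_neg_of_add_eq_zero_left h, neg_sub]
  simpa [pathClass_zero] using eq_add_nsmul_of_sub_eq_sub hx ha

lemma nsmul_pathClass_one (hm : 1 ≤ m) : (1 + m * (N - 1)) • pathClass N m 1 = 0 := by
  have h := pathClass_relation N m hm le_rfl
  simp only [lt_irrefl, if_false, show 0 < m by omega, if_true, show m ≠ 0 by omega, if_true,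
    zero_add, add_zero, pathClass_zero] at h
  obtain ⟨k, rfl⟩ : ∃ k, m = k + 1 := ⟨m - 1, by omega⟩
  rw [pathClass_eq_nsmul N (k + 1) hm (a := k + 1 - 1) (by omega),
    pathClass_eq_nsmul N (k + 1) hm le_rfl, Nat.add_sub_cancel] at h
  rw [← neg_eq_zero, ← h, add_nsmul, one_nsmul, mul_nsmul, zero_sub, smul_neg]
  simp only [succ_nsmul _ k]
  abel

lemma dvd_sum_edgeCount_nsmul_pathPos_sub (hm : 1 ≤ m) (j : OneLongVert N m) :
    ((1 + m * (N - 1) : ℕ) : ℤ) ∣ ∑ u, (theta N (oneLong N m)).edgeCount j u •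
      ((pathPos N m u : ℤ) - pathPos N m j) := by
  obtain ⟨b, hb, rfl⟩ : ∃ b ≤ m, pathVert N m b = j :=
    ⟨_, pathPos_le N m j, pathVert_pathPos N m hm j⟩
  rw [pathPos_pathVert N m hb, sum_edgeCount_pathVert_nsmul N m hm (fun a => (a : ℤ) - b) hb]
  rcases Nat.eq_zero_or_pos b with rfl | hb0
  · rw [if_pos (by omega), if_neg (lt_irrefl 0), if_pos rfl, if_neg (by omega)]
    exact Dvd.intro 1 (by push_cast; ring)
  rcases hb.lt_or_eq with hbm | rfl
  · rw [if_pos hbm, if_pos hb0, if_neg (by omega), if_neg (by omega)]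
    exact Dvd.intro 0 (by push_cast [Nat.cast_sub hb0]; ring)
  · rw [if_neg (lt_irrefl _), if_pos hb0, if_neg (by omega), if_pos rfl]
    exact Dvd.intro (-1) (by push_cast [Nat.cast_sub hb0]; ring)

end OneLongPath

end Multigraph

open Multigraph in
/-- `Δ_N(1^m)`: the degree class group of two vertices joined by one path of length `m`
and `N - 1` single edges is cyclic of order `1 + m * (N - 1)`. -/
theorem dcg_theta_one_long_path (N mv : ℕ) (hN : 2 ≤ N) (hmv : 1 ≤ mv) :
    Nonempty ((theta N fun i : Fin N => if i.val = 0 then mv else 1).DCG ≃+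
      ZMod (1 + mv * (N - 1))) := by
  have : NeZero N := ⟨by omega⟩
  have hpos₀ : pathPos N mv (pathVert N mv 0) = 0 := pathPos_pathVert N mv (Nat.zero_le _)
  refine (theta N (oneLong N mv)).nonempty_DCG_addEquiv_zmod _ (fun v => pathPos N mv v)
    (dvd_sum_edgeCount_nsmul_pathPos_sub N mv hmv) (pathVert N mv 0) (pathVert N mv 1)
    (by simp [hpos₀, pathPos_pathVert N mv hmv]) (fun v => ?_) (nsmul_pathClass_one N mv hmv)
  rw [hpos₀, Nat.cast_zero, sub_zero, natCast_zsmul]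
  conv_lhs => rw [← pathVert_pathPos N mv hmv v]
  exact pathClass_eq_nsmul N mv hmv (pathPos_le N mv v)
end
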